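/- Let f : ZMod 5 → Fin 3 be a cyclic word containing the color p exactly once and the colors r and b each exactly twice. Then f can be extended, by inserting one new element of color p, to a length-6 cyclic word satisfying the P3-constraint if and only if the two cyclic neighbors of the occurrence of p in f are both colored r or both colored b. -/

import Mathlib

namespace SATR

def red : Fin 3 := 0
def blue : Fin 3 := 1
def purple : Fin 3 := 2

/-- `x` lies strictly inside the cyclic arc from `a` to `c` (in the `+1` direction). -/
def arcBetween {n : ℕ} [NeZero n] (a x c : ZMod n) : Prop :=
  0 < (x - a).val ∧ (x - a).val < (c - a).val

/-- Colors `c` and `c'` alternate in the cyclic word `f`: there are two positions of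
color `c` such that each of the two open cyclic arcs they determine contains a
position of color `c'`. -/
def Alternates {n : ℕ} [NeZero n] (f : ZMod n → Fin 3) (c c' : Fin 3) : Prop :=
  ∃ i1 i2 j1 j2 : ZMod n, f i1 = c ∧ f i2 = c ∧ i1 ≠ i2 ∧
    f j1 = c' ∧ f j2 = c' ∧ arcBetween i1 j1 i2 ∧ arcBetween i2 j2 i1

/-- The K3-constraint: all three pairs of distinct colors alternate. -/
def K3Constraint (w : ZMod 6 → Fin 3) : Prop :=
  Alternates w red blue ∧ Alternates w red purple ∧ Alternates w blue purple

/-- The P3-constraint: r–p and b–p alternate, r–b do not. -/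
def P3Constraint (w : ZMod 6 → Fin 3) : Prop :=
  Alternates w red purple ∧ Alternates w blue purple ∧ ¬ Alternates w red blue

/-- Number of occurrences of color `c` in the cyclic word `f`. -/
def count {n : ℕ} [NeZero n] (f : ZMod n → Fin 3) (c : Fin 3) : ℕ :=
  (Finset.univ.filter fun i => f i = c).card

/-- Insert a new element of color `c` into the gap right after position `g`. -/
def insertAt {n : ℕ} [NeZero n] (f : ZMod n → Fin 3) (g : ZMod n) (c : Fin 3) :
    ZMod (n + 1) → Fin 3 :=
  fun j =>
    if j.val = g.val + 1 then c
    else if j.val ≤ g.val then f (j.val : ZMod n)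
    else f ((j.val - 1 : ℕ) : ZMod n)

/-- Insert `c1` right after position `g`, and `c2` immediately (cyclically) after `c1`,
so the two new elements are cyclically consecutive. -/
def insertPair {n : ℕ} [NeZero n] (f : ZMod n → Fin 3) (g : ZMod n) (c1 c2 : Fin 3) :
    ZMod (n + 2) → Fin 3 :=
  insertAt (insertAt f g c1) ((g.val + 1 : ℕ) : ZMod (n + 1)) c2

/-- The cyclic distance between two positions: the minimum of the two arc lengths. -/
def cycDist {n : ℕ} [NeZero n] (i j : ZMod n) : ℕ :=
  min (j - i).val (i - j).val

/-!
Purple alternates with both red and blue exactly when each of the two arcs cut out by the two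
purples contains a red and a blue. There are only four non-purple letters, so the new purple
must sit opposite the old one `f i`, in the gap after `i + 2`. Reading the non-purple letters
from the old purple onwards as `R x y L`, the arcs are then `{R, x}` and `{y, L}`, each with one
red and one blue, and red and blue do not alternate exactly when `R = L`. Both steps are finite
checks over words of length five, carried out by kernel evaluation.
-/

instance {n : ℕ} [NeZero n] (a x c : ZMod n) : Decidable (arcBetween a x c) := by
  unfold arcBetween; infer_instance

-- The quantifiers are interleaved with their conditions so that evaluation prunes early.
instance {n : ℕ} [NeZero n] (f : ZMod n → Fin 3) (c c' : Fin 3) :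
    Decidable (Alternates f c c') :=
  decidable_of_iff
    (∃ i1, f i1 = c ∧ ∃ i2, f i2 = c ∧ i1 ≠ i2 ∧ ∃ j1, f j1 = c' ∧ arcBetween i1 j1 i2 ∧
      ∃ j2, f j2 = c' ∧ arcBetween i2 j2 i1)
    ⟨fun ⟨i1, h1, i2, h2, hne, j1, h3, a1, j2, h4, a2⟩ =>
        ⟨i1, i2, j1, j2, h1, h2, hne, h3, h4, a1, a2⟩,
      fun ⟨i1, i2, j1, j2, h1, h2, hne, h3, h4, a1, a2⟩ =>
        ⟨i1, h1, i2, h2, hne, j1, h3, a1, j2, h4, a2⟩⟩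

instance (w : ZMod 6 → Fin 3) : Decidable (P3Constraint w) := by
  unfold P3Constraint; infer_instance

theorem exists_apply_eq_of_count_pos {n : ℕ} [NeZero n] {f : ZMod n → Fin 3} {c : Fin 3}
    (h : 0 < count f c) : ∃ i, f i = c := by
  obtain ⟨i, hi⟩ := Finset.card_pos.mp h
  exact ⟨i, (Finset.mem_filter.mp hi).2⟩

theorem eq_add_two_of_p3Constraint_insertAt {f : ZMod 5 → Fin 3}
    (hp : count f purple = 1) (hr : count f red = 2) (hb : count f blue = 2)
    {i g : ZMod 5} (hi : f i = purple) (hg : P3Constraint (insertAt f g purple)) :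
    g = i + 2 := by
  revert f i g
  decide +kernel

theorem p3Constraint_insertAt_add_two_iff {f : ZMod 5 → Fin 3}
    (hp : count f purple = 1) (hr : count f red = 2) (hb : count f blue = 2)
    {i : ZMod 5} (hi : f i = purple) :
    P3Constraint (insertAt f (i + 2) purple) ↔
      (f (i - 1) = red ∧ f (i + 1) = red) ∨ (f (i - 1) = blue ∧ f (i + 1) = blue) := by
  revert f i
  decide +kernel

/-- The P3^{-p}-constraint: a length-5 cyclic word with one purple, two reds and two
blues can be extended by inserting one new purple to a P3-satisfying length-6 word
iff the two cyclic neighbors of the purple element are both red or both blue. -/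
theorem p3_minus_p_iff_purple_between_equal_pair
    (f : ZMod 5 → Fin 3)
    (hp : count f purple = 1) (hr : count f red = 2) (hb : count f blue = 2) :
    (∃ g : ZMod 5, P3Constraint (insertAt f g purple)) ↔
      (∀ i : ZMod 5, f i = purple →
        ((f (i - 1) = red ∧ f (i + 1) = red) ∨ (f (i - 1) = blue ∧ f (i + 1) = blue))) := by
  constructor
  · rintro ⟨g, hg⟩ i hi
    obtain rfl := eq_add_two_of_p3Constraint_insertAt hp hr hb hi hg
    exact (p3Constraint_insertAt_add_two_iff hp hr hb hi).1 hg
  · intro h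
    obtain ⟨i, hi⟩ := exists_apply_eq_of_count_pos (hp ▸ one_pos)
    exact ⟨i + 2, (p3Constraint_insertAt_add_two_iff hp hr hb hi).2 (h i hi)⟩

end SATR
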